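/- For positive integers a and J ≥ 3, H(2a, J) ≤ 2·H(a, J−1) + 2a. -/
import Mathlib


/-- A finite set of naturals is a Golomb ruler: all differences of
distinct pairs are distinct. -/
def IsGolomb (A : Finset ℕ) : Prop :=
  ∀ a ∈ A, ∀ b ∈ A, ∀ c ∈ A, ∀ d ∈ A,
    a ≠ b → c ≠ d → (a : ℤ) - b = (c : ℤ) - d → a = c ∧ b = d

/-- `F` is a family of `I` pairwise disjoint `J`-element Golomb rulers,
each contained in `{1, ..., n}`: an `(I,J,n)`-DGR. -/
def IsDGR (I J n : ℕ) (F : Fin I → Finset ℕ) : Prop :=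
  (∀ i, (F i).card = J) ∧ (∀ i, IsGolomb (F i)) ∧
  (∀ i, F i ⊆ Finset.Icc 1 n) ∧
  (∀ i j, i ≠ j → Disjoint (F i) (F j))

/-- `H I J` is the least positive `n` such that an `(I,J,n)`-DGR exists. -/
noncomputable def H (I J : ℕ) : ℕ :=
  sInf {n | 0 < n ∧ ∃ F : Fin I → Finset ℕ, IsDGR I J n F}

/-- `A` contains `I` pairwise disjoint `J`-element Golomb rulers. -/
def HasDGRin (I J : ℕ) (A : Finset ℕ) : Prop :=
  ∃ F : Fin I → Finset ℕ,
    (∀ i, (F i).card = J) ∧ (∀ i, IsGolomb (F i)) ∧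
    (∀ i, F i ⊆ A) ∧ (∀ i j, i ≠ j → Disjoint (F i) (F j))

/-- The defining set for `Y I J`. -/
def YSet (I J : ℕ) : Set ℕ :=
  {n | 0 < n ∧ ∀ A : Finset ℕ, (∀ a ∈ A, 0 < a) → A.card = n → HasDGRin I J A}

/-- `Y I J` is the least positive `n` such that every set of `n`
positive integers contains `I` disjoint `J`-element Golomb rulers. -/
noncomputable def Y (I J : ℕ) : ℕ := sInf (YSet I J)

lemma golomb_insert {A : Finset ℕ} {L U e : ℕ}
    (hA : IsGolomb A) (hL : ∀ x ∈ A, L ≤ x) (hU : ∀ x ∈ A, x ≤ U)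
    (he : ∀ x ∈ A, ((U:ℤ) - L < (e:ℤ) - x) ∨ ((e:ℤ) - x < (L:ℤ) - U)) :
    IsGolomb (insert e A) := by
  intro a ha b hb c hc d hd hab hcd heq
  rw [Finset.mem_insert] at ha hb hc hd
  rcases ha with rfl | ha <;> rcases hb with rfl | hb <;>
    rcases hc with rfl | hc <;> rcases hd with rfl | hd
  · exact absurd rfl hab
  · exact absurd rfl hab
  · exact absurd rfl hab
  · exact absurd rfl hab
  -- a = e, b ∈ A
  · exact absurd rfl hcd
  · -- a=e, b∈A, c=e, d∈A : b = d
    exact ⟨rfl, by omega⟩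
  · -- a=e, b∈A, c∈A, d=e
    have h1 := hL b hb; have h2 := hU b hb
    have h3 := hL c hc; have h4 := hU c hc
    rcases he b hb with h5 | h5 <;> rcases he c hc with h6 | h6 <;> omega
  · -- a=e, b∈A, c∈A, d∈A
    have h1 := hL c hc; have h2 := hU c hc
    have h3 := hL d hd; have h4 := hU d hd
    rcases he b hb with h5 | h5 <;> omega
  -- a ∈ A, b = e
  · exact absurd rfl hcd
  · -- a∈A, b=e, c=e, d∈A
    have h1 := hL a ha; have h2 := hU a ha
    have h3 := hL d hd; have h4 := hU d hd
    rcases he a ha with h5 | h5 <;> rcases he d hd with h6 | h6 <;> omega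
  · -- a∈A, b=e, c∈A, d=e : a = c
    exact ⟨by omega, rfl⟩
  · -- a∈A, b=e, c∈A, d∈A
    have h1 := hL c hc; have h2 := hU c hc
    have h3 := hL d hd; have h4 := hU d hd
    rcases he a ha with h5 | h5 <;> omega
  -- a ∈ A, b ∈ A
  · exact absurd rfl hcd
  · -- c=e, d∈A
    have h1 := hL a ha; have h2 := hU a ha
    have h3 := hL b hb; have h4 := hU b hb
    rcases he d hd with h5 | h5 <;> omega
  · -- c∈A, d=e
    have h1 := hL a ha; have h2 := hU a ha
    have h3 := hL b hb; have h4 := hU b hb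
    rcases he c hc with h5 | h5 <;> omega
  · exact hA a ha b hb c hc d hd hab hcd heq


lemma golomb_image_add (t : ℕ) {A : Finset ℕ} (hA : IsGolomb A) :
    IsGolomb (A.image (· + t)) := by
  intro a ha b hb c hc d hd hab hcd heq
  simp only [Finset.mem_image] at ha hb hc hd
  obtain ⟨a', ha', rfl⟩ := ha
  obtain ⟨b', hb', rfl⟩ := hb
  obtain ⟨c', hc', rfl⟩ := hc
  obtain ⟨d', hd', rfl⟩ := hd
  have := hA a' ha' b' hb' c' hc' d' hd' (by omega) (by omega)
    (by push_cast at heq ⊢; omega)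
  omega


lemma exists_golomb (s : ℕ) : ∃ (A : Finset ℕ) (U : ℕ), 0 < U ∧ A.card = s ∧
    IsGolomb A ∧ A ⊆ Finset.Icc 1 U := by
  induction s with
  | zero =>
    exact ⟨∅, 1, one_pos, rfl, by intro x hx; simp at hx, by simp⟩
  | succ n ih =>
    obtain ⟨A, U, hU, hcard, hg, hsub⟩ := ih
    have hmem : ∀ x ∈ A, 1 ≤ x ∧ x ≤ U := by
      intro x hx; exact Finset.mem_Icc.1 (hsub hx)
    refine ⟨insert (2*U) A, 2*U, by omega, ?_, ?_, ?_⟩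
    · rw [Finset.card_insert_of_notMem (fun h => by have := hmem _ h; omega), hcard]
    · exact golomb_insert hg (fun x hx => (hmem x hx).1) (fun x hx => (hmem x hx).2)
        (fun x hx => by have := hmem x hx; left; push_cast; omega)
    · intro x hx
      rcases Finset.mem_insert.1 hx with rfl | hx
      · simp [Finset.mem_Icc]; omega
      · have := hmem x hx; simp [Finset.mem_Icc]; omega


lemma exists_DGR (I J : ℕ) : ∃ n, 0 < n ∧ ∃ F : Fin I → Finset ℕ, IsDGR I J n F := by
  obtain ⟨A, U, hU, hcard, hg, hsub⟩ := exists_golomb J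
  have hmem : ∀ x ∈ A, 1 ≤ x ∧ x ≤ U := fun x hx => Finset.mem_Icc.1 (hsub hx)
  refine ⟨I * U + 1, by omega, fun i => A.image (· + (i : ℕ) * U), ?_, ?_, ?_, ?_⟩
  · intro i
    rw [Finset.card_image_of_injective _ (add_left_injective _), hcard]
  · intro i; exact golomb_image_add _ hg
  · intro i x hx
    simp only [Finset.mem_image] at hx
    obtain ⟨y, hy, rfl⟩ := hx
    have := hmem y hy
    have : (i : ℕ) < I := i.isLt
    have : (i : ℕ) * U + U ≤ I * U := by
      calc (i:ℕ) * U + U = ((i:ℕ) + 1) * U := by ring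
      _ ≤ I * U := Nat.mul_le_mul_right _ (by omega)
    simp only [Finset.mem_Icc]
    omega
  · intro i j hij
    rw [Finset.disjoint_left]
    intro x hx hx'
    simp only [Finset.mem_image] at hx hx'
    obtain ⟨y, hy, rfl⟩ := hx
    obtain ⟨z, hz, hzx⟩ := hx'
    have h1 := hmem y hy
    have h2 := hmem z hz
    have : (i : ℕ) ≠ (j : ℕ) := fun h => hij (Fin.ext h)
    rcases Nat.lt_or_ge (i:ℕ) (j:ℕ) with h | h
    · have : (i:ℕ) * U + U ≤ (j:ℕ) * U := by
        calc (i:ℕ) * U + U = ((i:ℕ)+1) * U := by ring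
        _ ≤ (j:ℕ) * U := Nat.mul_le_mul_right _ (by omega)
      omega
    · have : (j:ℕ) * U + U ≤ (i:ℕ) * U := by
        calc (j:ℕ) * U + U = ((j:ℕ)+1) * U := by ring
        _ ≤ (i:ℕ) * U := Nat.mul_le_mul_right _ (by omega)
      omega


lemma build (m aa J : ℕ) (hm : 0 < m) (hJ : 3 ≤ J)
    (F : Fin aa → Finset ℕ) (hF : IsDGR aa (J-1) m F) :
    ∃ G : Fin (2*aa) → Finset ℕ, IsDGR (2*aa) J (2*m+2*aa) G := by
  obtain ⟨hFcard, hFgol, hFsub, hFdisj⟩ := hF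
  have hFmem : ∀ i : Fin aa, ∀ x ∈ F i, 1 ≤ x ∧ x ≤ m :=
    fun i x hx => Finset.mem_Icc.1 (hFsub i hx)
  refine ⟨fun k => if h : (k:ℕ) < aa
      then insert (2*m+aa+1+(k:ℕ)) ((F ⟨(k:ℕ), h⟩).image (· + aa))
      else insert ((k:ℕ)-aa+1)
        ((F ⟨(k:ℕ)-aa, by have := k.isLt; omega⟩).image (· + (m+aa))),
    ?_, ?_, ?_, ?_⟩
  · -- cards
    intro k
    by_cases h : (k:ℕ) < aa
    · simp only [dif_pos h]
      rw [Finset.card_insert_of_notMem, Finset.card_image_of_injective _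
        (add_left_injective _), hFcard]
      · omega
      · simp only [Finset.mem_image]
        rintro ⟨y, hy, hyx⟩
        have := hFmem _ y hy; omega
    · simp only [dif_neg h]
      rw [Finset.card_insert_of_notMem, Finset.card_image_of_injective _
        (add_left_injective _), hFcard]
      · omega
      · simp only [Finset.mem_image]
        rintro ⟨y, hy, hyx⟩
        have := hFmem _ y hy
        have := k.isLt
        omega
  · -- golomb
    intro k
    by_cases h : (k:ℕ) < aa
    · simp only [dif_pos h]
      apply golomb_insert (L := aa+1) (U := m+aa) (golomb_image_add _ (hFgol _))
      · intro x hx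
        simp only [Finset.mem_image] at hx
        obtain ⟨y, hy, rfl⟩ := hx
        have := hFmem _ y hy; omega
      · intro x hx
        simp only [Finset.mem_image] at hx
        obtain ⟨y, hy, rfl⟩ := hx
        have := hFmem _ y hy; omega
      · intro x hx
        simp only [Finset.mem_image] at hx
        obtain ⟨y, hy, rfl⟩ := hx
        have := hFmem _ y hy
        left; push_cast; omega
    · simp only [dif_neg h]
      apply golomb_insert (L := m+aa+1) (U := 2*m+aa) (golomb_image_add _ (hFgol _))
      · intro x hx
        simp only [Finset.mem_image] at hx
        obtain ⟨y, hy, rfl⟩ := hx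
        have := hFmem _ y hy; omega
      · intro x hx
        simp only [Finset.mem_image] at hx
        obtain ⟨y, hy, rfl⟩ := hx
        have := hFmem _ y hy; omega
      · intro x hx
        simp only [Finset.mem_image] at hx
        obtain ⟨y, hy, rfl⟩ := hx
        have := hFmem _ y hy
        have := k.isLt
        right; push_cast; omega
  · -- subset
    intro k x hx
    by_cases h : (k:ℕ) < aa
    · simp only [dif_pos h] at hx
      rcases Finset.mem_insert.1 hx with rfl | hx
      · simp only [Finset.mem_Icc]; omega
      · simp only [Finset.mem_image] at hx
        obtain ⟨y, hy, rfl⟩ := hx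
        have := hFmem _ y hy
        simp only [Finset.mem_Icc]; omega
    · simp only [dif_neg h] at hx
      have := k.isLt
      rcases Finset.mem_insert.1 hx with rfl | hx
      · simp only [Finset.mem_Icc]; omega
      · simp only [Finset.mem_image] at hx
        obtain ⟨y, hy, rfl⟩ := hx
        have := hFmem _ y hy
        simp only [Finset.mem_Icc]; omega
  · -- disjoint
    intro k l hkl
    have hk2 := k.isLt
    have hl2 := l.isLt
    have hklv : (k:ℕ) ≠ (l:ℕ) := fun h => hkl (Fin.ext h)
    rw [Finset.disjoint_left]
    intro x hx hx'
    by_cases hk : (k:ℕ) < aa <;> by_cases hl : (l:ℕ) < aa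
    · simp only [dif_pos hk] at hx
      simp only [dif_pos hl] at hx'
      simp only [Finset.mem_insert, Finset.mem_image] at hx hx'
      rcases hx with rfl | ⟨y, hy, rfl⟩
      · rcases hx' with h1 | ⟨z, hz, hzx⟩
        · omega
        · have := hFmem _ z hz; omega
      · rcases hx' with h1 | ⟨z, hz, hzx⟩
        · have := hFmem _ y hy; omega
        · have hyz : y = z := by omega
          subst hyz
          have hne : (⟨(k:ℕ), hk⟩ : Fin aa) ≠ ⟨(l:ℕ), hl⟩ := by
            intro h; exact hklv (by simpa using congrArg Fin.val h)
          exact Finset.disjoint_left.1 (hFdisj _ _ hne) hy hz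
    · simp only [dif_pos hk] at hx
      simp only [dif_neg hl] at hx'
      simp only [Finset.mem_insert, Finset.mem_image] at hx hx'
      rcases hx with rfl | ⟨y, hy, rfl⟩ <;>
        rcases hx' with h1 | ⟨z, hz, hzx⟩ <;>
        [skip; (have := hFmem _ z hz); skip; (have := hFmem _ z hz)] <;>
        first
        | omega
        | (have := hFmem _ y hy; omega)
    · simp only [dif_neg hk] at hx
      simp only [dif_pos hl] at hx'
      simp only [Finset.mem_insert, Finset.mem_image] at hx hx'
      rcases hx with rfl | ⟨y, hy, rfl⟩ <;>
        rcases hx' with h1 | ⟨z, hz, hzx⟩ <;>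
        [skip; (have := hFmem _ z hz); skip; (have := hFmem _ z hz)] <;>
        first
        | omega
        | (have := hFmem _ y hy; omega)
    · simp only [dif_neg hk] at hx
      simp only [dif_neg hl] at hx'
      simp only [Finset.mem_insert, Finset.mem_image] at hx hx'
      rcases hx with rfl | ⟨y, hy, rfl⟩
      · rcases hx' with h1 | ⟨z, hz, hzx⟩
        · omega
        · have := hFmem _ z hz; omega
      · rcases hx' with h1 | ⟨z, hz, hzx⟩
        · have := hFmem _ y hy; omega
        · have hyz : y = z := by omega
          subst hyz
          have hne : (⟨(k:ℕ)-aa, by omega⟩ : Fin aa) ≠ ⟨(l:ℕ)-aa, by omega⟩ := by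
            intro h
            have : (k:ℕ)-aa = (l:ℕ)-aa := by simpa using congrArg Fin.val h
            omega
          exact Finset.disjoint_left.1 (hFdisj _ _ hne) hy hz

theorem H_two_a (a J : ℕ) (ha : 0 < a) (hJ : 3 ≤ J) :
    H (2 * a) J ≤ 2 * H a (J - 1) + 2 * a := by

  have hne : {n | 0 < n ∧ ∃ F : Fin a → Finset ℕ, IsDGR a (J-1) n F}.Nonempty := by
    obtain ⟨n, hn, F, hF⟩ := exists_DGR a (J-1)
    exact ⟨n, hn, F, hF⟩
  have hm : 0 < H a (J-1) ∧ ∃ F : Fin a → Finset ℕ, IsDGR a (J-1) (H a (J-1)) F :=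
    Nat.sInf_mem hne
  obtain ⟨hmpos, F, hF⟩ := hm
  obtain ⟨G, hG⟩ := build (H a (J-1)) a J hmpos hJ F hF
  exact Nat.sInf_le ⟨by omega, G, hG⟩
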